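/- arXiv:2401.11918 — 2 statements merged into one kernel-verified Lean document; each statement's English description precedes it below -/
import Mathlib

section
/- For every finite set S ⊂ ℝ and every n ∈ ℕ, there exist a natural number N > n and a phase shift φ ∈ [0, 2π) such that cos(N s + φ) > 0 for every s ∈ S. -/
open Real

noncomputable section

/-- A knot parametrization: a smooth, `2π`-periodic map `ℝ → ℝ³`
that is injective on `[0, 2π)`. -/
def KnotParam (f : ℝ → ℝ × ℝ × ℝ) : Prop :=
  ContDiff ℝ (⊤ : ℕ∞) f ∧ Function.Periodic f (2 * π) ∧
    Set.InjOn f (Set.Ico 0 (2 * π))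

/-- Two parametrized curves in `ℝ³` are ambient isotopic. -/
def AmbientIsotopic (f g : ℝ → ℝ × ℝ × ℝ) : Prop :=
  ∃ H : ℝ × (ℝ × ℝ × ℝ) → ℝ × ℝ × ℝ,
    ContinuousOn H (Set.Icc (0:ℝ) 1 ×ˢ Set.univ) ∧
    (∀ x, H (0, x) = x) ∧
    (∀ s ∈ Set.Icc (0:ℝ) 1, ∃ h : (ℝ × ℝ × ℝ) ≃ₜ (ℝ × ℝ × ℝ), ∀ x, H (s, x) = h x) ∧
    (fun x => H (1, x)) '' Set.range f = Set.range g

/-- The trigonometric polynomial with cosine coefficients `a`, sine coefficients `b`,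
formally of degree at most `N`. -/
def trigPoly (a b : ℕ → ℝ) (N : ℕ) : ℝ → ℝ :=
  fun t => a 0 + ∑ k ∈ Finset.Icc 1 N, (a k * Real.cos (k * t) + b k * Real.sin (k * t))

/-- A `2π`-periodic planar curve is 1-covered. -/
def OneCovered (g : ℝ → ℝ × ℝ) : Prop :=
  ∃ t₀ ∈ Set.Ico (0:ℝ) (2 * π), ∀ s ∈ Set.Ico (0:ℝ) (2 * π), g s = g t₀ → s = t₀

/-- The set of self-intersection pairs of a planar curve. -/
def SelfIntPairs (g : ℝ → ℝ × ℝ) : Set (ℝ × ℝ) :=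
  {p : ℝ × ℝ | 0 ≤ p.1 ∧ p.1 < p.2 ∧ p.2 < 2 * π ∧ g p.1 = g p.2}


private lemma aux_abs_sub_lt_one_of_floor_eq {u v : ℝ} (h : ⌊u⌋ = ⌊v⌋) : |u - v| < 1 := by
  have h1 := Int.floor_le u
  have h2 := Int.lt_floor_add_one u
  have h3 := Int.floor_le v
  have h4 := Int.lt_floor_add_one v
  rw [h] at h1 h2
  rw [abs_sub_lt_iff]
  constructor <;> linarith

private lemma aux_cos_pos_of_near_int (d : ℝ) (z : ℤ) (hd : |d| < 1/4) :
    0 < Real.cos ((d + z) * (2 * π)) := by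
  have hπ := Real.pi_pos
  have he : (d + z) * (2 * π) = d * (2 * π) + z * (2 * π) := by ring
  rw [he, Real.cos_add_int_mul_two_pi]
  apply Real.cos_pos_of_mem_Ioo
  rw [abs_lt] at hd
  constructor <;> nlinarith

/-- For every finite set `S ⊂ ℝ` and every `n`, there are `N > n` and a
phase `φ ∈ [0, 2π)` such that `cos (N s + φ) > 0` for all `s ∈ S`. -/
theorem stmt6 (S : Finset ℝ) (n : ℕ) :
    ∃ N : ℕ, n < N ∧ ∃ φ ∈ Set.Ico (0:ℝ) (2 * π),
      ∀ s ∈ S, 0 < Real.cos (N * s + φ) := by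
  classical
  have hπ := Real.pi_pos
  set x : ↥S → ℝ := fun s => (s : ℝ) / (2 * π) with hx
  have hfr0 : ∀ (k : ℕ) (s : ↥S), (0:ℝ) ≤ Int.fract ((k : ℝ) * x s) :=
    fun k s => Int.fract_nonneg _
  have hfr1 : ∀ (k : ℕ) (s : ↥S), Int.fract ((k : ℝ) * x s) < 1 :=
    fun k s => Int.fract_lt_one _
  let F : Fin (4 ^ S.card + 1) → (↥S → Fin 4) := fun j s =>
    ⟨(⌊4 * Int.fract (((j : ℕ) * (n+1) : ℕ) * x s)⌋).toNat, by
      have h1 := hfr0 ((j : ℕ) * (n+1)) s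
      have h2 := hfr1 ((j : ℕ) * (n+1)) s
      have h3 : ⌊4 * Int.fract ((((j : ℕ) * (n+1) : ℕ) : ℝ) * x s)⌋ < 4 := by
        apply Int.floor_lt.2; push_cast at h1 h2 ⊢; linarith
      omega⟩
  have hcard : Fintype.card (↥S → Fin 4) < Fintype.card (Fin (4 ^ S.card + 1)) := by
    simp [Fintype.card_fun, Fintype.card_coe]
  obtain ⟨j, j', hlt, hEq⟩ : ∃ j j' : Fin (4 ^ S.card + 1), (j : ℕ) < (j' : ℕ) ∧ F j = F j' := by
    obtain ⟨a, b, hne, h⟩ := Fintype.exists_ne_map_eq_of_card_lt F hcard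
    rcases lt_or_gt_of_ne hne with h' | h'
    · exact ⟨a, b, h', h⟩
    · exact ⟨b, a, h', h.symm⟩
  set d : ℕ := (j' : ℕ) - (j : ℕ) with hd
  have hdpos : 0 < d := by omega
  refine ⟨d * (n+1), ?_, 0, ⟨le_refl 0, by positivity⟩, ?_⟩
  · calc n < n + 1 := Nat.lt_succ_self n
      _ ≤ d * (n+1) := Nat.le_mul_of_pos_left _ hdpos
  · intro s hs
    set σ : ↥S := ⟨s, hs⟩ with hσ
    set A : ℝ := (((j : ℕ) * (n+1) : ℕ) : ℝ) * x σ with hA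
    set B : ℝ := (((j' : ℕ) * (n+1) : ℕ) : ℝ) * x σ with hB
    have hFeq : F j σ = F j' σ := congrFun hEq σ
    have htn : (⌊4 * Int.fract A⌋).toNat = (⌊4 * Int.fract B⌋).toNat := by
      simpa [F, hA, hB] using congrArg Fin.val hFeq
    have hfl : ⌊4 * Int.fract A⌋ = ⌊4 * Int.fract B⌋ := by
      have hA0 : 0 ≤ ⌊4 * Int.fract A⌋ :=
        Int.floor_nonneg.2 (mul_nonneg (by norm_num) (Int.fract_nonneg _))
      have hB0 : 0 ≤ ⌊4 * Int.fract B⌋ :=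
        Int.floor_nonneg.2 (mul_nonneg (by norm_num) (Int.fract_nonneg _))
      omega
    have habs : |4 * Int.fract A - 4 * Int.fract B| < 1 := aux_abs_sub_lt_one_of_floor_eq hfl
    have hd4 : |Int.fract B - Int.fract A| < 1/4 := by
      rw [abs_sub_lt_iff] at habs ⊢; constructor <;> linarith [habs.1, habs.2]
    have hsum : ((d * (n+1) : ℕ) : ℝ) * s + 0 =
        ((Int.fract B - Int.fract A) + (⌊B⌋ - ⌊A⌋ : ℤ)) * (2 * π) := by
      have hfA : Int.fract A = A - ⌊A⌋ := Int.self_sub_floor A ▸ rfl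
      have hfB : Int.fract B = B - ⌊B⌋ := Int.self_sub_floor B ▸ rfl
      have hBA : B - A = ((d * (n+1) : ℕ) : ℝ) * x σ := by
        rw [hA, hB, hd]
        push_cast [Nat.cast_sub hlt.le]
        ring
      have hxσ : x σ * (2 * π) = s := by
        rw [hx]
        field_simp
        rfl
      have hgoal : ((d * (n+1) : ℕ) : ℝ) * s + 0 = (B - A) * (2 * π) := by
        rw [hBA, mul_assoc, hxσ]
        ring
      rw [hgoal, hfA, hfB]
      push_cast
      ring
    rw [hsum]
    exact aux_cos_pos_of_near_int _ _ hd4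
end
end

section
/- Let n₁, n₂, n₃ be pairwise coprime odd natural numbers, let φ₁, φ₂, φ₃ ∈ [0, 2π), and suppose the Lissajous curve f(t) = (cos(n₁ t + φ₁), cos(n₂ t + φ₂), cos(n₃ t + φ₃)) is injective on [0, 2π). Then for every n ≥ 1 the n-th derivative f^{(n)} is injective on [0, 2π) and ambient isotopic to f; that is, the loop sequence of f is constant and f parametrizes a limit knot. -/
open Real

noncomputable section

private lemma cosAddNatPi (x : ℝ) (k : ℕ) :
    Real.cos (x + k * π) = (-1)^k * Real.cos x := by
  induction k with
  | zero => simp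
  | succ k ih =>
    have h : x + ((k+1 : ℕ) : ℝ) * π = (x + k * π) + π := by push_cast; ring
    rw [h, Real.cos_add_pi, ih]; push_cast; ring

private def rot2 (θ : ℝ) : (ℝ × ℝ) ≃ₜ (ℝ × ℝ) where
  toFun p := (p.1 * Real.cos θ - p.2 * Real.sin θ, p.1 * Real.sin θ + p.2 * Real.cos θ)
  invFun p := (p.1 * Real.cos θ + p.2 * Real.sin θ, - p.1 * Real.sin θ + p.2 * Real.cos θ)
  left_inv p := by
    obtain ⟨x, y⟩ := p
    have h := Real.sin_sq_add_cos_sq θ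
    simp only [Prod.mk.injEq]
    constructor
    · linear_combination x * h
    · linear_combination y * h
  right_inv p := by
    obtain ⟨x, y⟩ := p
    have h := Real.sin_sq_add_cos_sq θ
    simp only [Prod.mk.injEq]
    constructor
    · linear_combination x * h
    · linear_combination y * h
  continuous_toFun := by fun_prop
  continuous_invFun := by fun_prop

private lemma hasDerivAt_mul_cos (A a φ t : ℝ) :
    HasDerivAt (fun t => A * Real.cos (a * t + φ)) (-(A * a) * Real.sin (a * t + φ)) t := by
  have h1 : HasDerivAt (fun t : ℝ => a * t + φ) a t := by
    simpa using ((hasDerivAt_id t).const_mul a).add_const φ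
  have h2 := (Real.hasDerivAt_cos (a * t + φ)).comp t h1
  have h3 := h2.const_mul A
  rw [show -(A * a) * Real.sin (a * t + φ) = A * (-Real.sin (a * t + φ) * a) by ring]
  exact h3

private lemma hasDerivAt_step (a φ t : ℝ) (k : ℕ) :
    HasDerivAt (fun t => a^k * Real.cos (a * t + φ + k * (π/2)))
      (a^(k+1) * Real.cos (a * t + φ + (k+1) * (π/2))) t := by
  have h := hasDerivAt_mul_cos (a^k) a (φ + k * (π/2)) t
  have e1 : ∀ s : ℝ, a * s + (φ + k * (π/2)) = a * s + φ + k * (π/2) := fun s => by ring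
  have e2 : a^(k+1) * Real.cos (a * t + φ + (k+1) * (π/2))
      = -(a^k * a) * Real.sin (a * t + (φ + k * (π/2))) := by
    have : a * t + φ + ((k:ℝ)+1) * (π/2) = (a * t + (φ + k * (π/2))) + π/2 := by ring
    push_cast
    rw [this, Real.cos_add_pi_div_two]
    ring
  rw [e2]
  simpa only [e1] using h

private lemma iter_formula (a₁ a₂ a₃ ψ₁ ψ₂ ψ₃ : ℝ) (f : ℝ → ℝ × ℝ × ℝ)
    (hf : ∀ t, f t = (Real.cos (a₁*t+ψ₁), Real.cos (a₂*t+ψ₂), Real.cos (a₃*t+ψ₃))) (n : ℕ) :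
    iteratedDeriv n f = fun t =>
      (a₁^n * Real.cos (a₁*t+ψ₁+n*(π/2)),
       a₂^n * Real.cos (a₂*t+ψ₂+n*(π/2)),
       a₃^n * Real.cos (a₃*t+ψ₃+n*(π/2))) := by
  induction n with
  | zero => funext t; simp [hf t]
  | succ k ih =>
    rw [iteratedDeriv_succ, ih]
    funext t
    push_cast
    exact (((hasDerivAt_step a₁ ψ₁ t k).prodMk
      ((hasDerivAt_step a₂ ψ₂ t k).prodMk (hasDerivAt_step a₃ ψ₃ t k)))).deriv

private def bigHomeo (m₁ m₂ m₃ : ℝ) (h₁ : m₁ ≠ 0) (h₂ : m₂ ≠ 0) (h₃ : m₃ ≠ 0) (θ ψ : ℝ) :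
    (ℝ × ℝ × ℝ) ≃ₜ (ℝ × ℝ × ℝ) :=
  ((Homeomorph.mulLeft₀ m₁ h₁).prodCongr
      ((Homeomorph.mulLeft₀ m₂ h₂).prodCongr (Homeomorph.mulLeft₀ m₃ h₃))).trans
    (((Homeomorph.refl ℝ).prodCongr (rot2 ψ)).trans
      (((Homeomorph.prodAssoc ℝ ℝ ℝ).symm).trans
        (((rot2 θ).prodCongr (Homeomorph.refl ℝ)).trans (Homeomorph.prodAssoc ℝ ℝ ℝ))))

private lemma bigHomeo_apply (m₁ m₂ m₃ : ℝ) (h₁ : m₁ ≠ 0) (h₂ : m₂ ≠ 0) (h₃ : m₃ ≠ 0)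
    (θ ψ : ℝ) (x : ℝ × ℝ × ℝ) :
    bigHomeo m₁ m₂ m₃ h₁ h₂ h₃ θ ψ x =
      (m₁ * x.1 * Real.cos θ - (m₂ * x.2.1 * Real.cos ψ - m₃ * x.2.2 * Real.sin ψ) * Real.sin θ,
       m₁ * x.1 * Real.sin θ + (m₂ * x.2.1 * Real.cos ψ - m₃ * x.2.2 * Real.sin ψ) * Real.cos θ,
       m₂ * x.2.1 * Real.sin ψ + m₃ * x.2.2 * Real.cos ψ) := rfl

private lemma coord_shift (m N E : ℕ) (a φ t b : ℝ) (ha : a = 2*(m:ℝ)+1)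
    (hb : b = N*(π/2) + (if Even E then (0:ℝ) else π)) :
    a^N * Real.cos (a*t + φ + N*(π/2))
      = ((-1:ℝ)^(m*N+E) * a^N) * Real.cos (a*(t+b) + φ) := by
  by_cases hE : Even E
  · have harg : a*(t+b) + φ = (a*t + φ + N*(π/2)) + ((m*N : ℕ):ℝ)*π := by
      rw [hb, if_pos hE, ha]; push_cast; ring
    rw [harg, cosAddNatPi]
    have h1 : ((-1:ℝ))^(m*N+E) * (-1:ℝ)^(m*N) = 1 := by
      rw [← pow_add]
      refine Even.neg_one_pow ?_
      have h2 : m*N+E+m*N = 2*(m*N)+E := by ring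
      rw [h2]; exact (even_two_mul _).add hE
    calc a^N * Real.cos (a*t + φ + N*(π/2))
        = ((-1:ℝ)^(m*N+E) * (-1:ℝ)^(m*N)) * (a^N * Real.cos (a*t + φ + N*(π/2))) := by
          rw [h1, one_mul]
      _ = ((-1:ℝ)^(m*N+E) * a^N) * ((-1:ℝ)^(m*N) * Real.cos (a*t + φ + N*(π/2))) := by ring
  · have harg : a*(t+b) + φ = (a*t + φ + N*(π/2)) + ((m*N + 2*m + 1 : ℕ):ℝ)*π := by
      rw [hb, if_neg hE, ha]; push_cast; ring
    rw [harg, cosAddNatPi]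
    have h1 : ((-1:ℝ))^(m*N+E) * (-1:ℝ)^(m*N+2*m+1) = 1 := by
      rw [← pow_add]
      refine Even.neg_one_pow ?_
      have h2 : m*N+E+(m*N+2*m+1) = 2*(m*N+m)+(E+1) := by ring
      rw [h2]
      exact (even_two_mul _).add ((Nat.not_even_iff_odd.mp hE).add_one)
    calc a^N * Real.cos (a*t + φ + N*(π/2))
        = ((-1:ℝ)^(m*N+E) * (-1:ℝ)^(m*N+2*m+1)) * (a^N * Real.cos (a*t + φ + N*(π/2))) := by
          rw [h1, one_mul]
      _ = ((-1:ℝ)^(m*N+E) * a^N) * ((-1:ℝ)^(m*N+2*m+1) * Real.cos (a*t + φ + N*(π/2))) := by ring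

private lemma key_ne (s κ : ℝ) (hs0 : 0 ≤ s) (hs1 : s ≤ 1) (hκ : 0 < κ) :
    (1 + s*(κ⁻¹-1)) ≠ 0 := by
  rcases eq_or_lt_of_le hs1 with h | h
  · rw [h]
    have h2 : (1:ℝ) + 1*(κ⁻¹-1) = κ⁻¹ := by ring
    rw [h2]
    exact (inv_pos.mpr hκ).ne'
  · have : (0:ℝ) < 1 + s*(κ⁻¹-1) := by
      nlinarith [mul_nonneg hs0 (inv_pos.mpr hκ).le]
    exact this.ne'

set_option maxHeartbeats 1000000 in
/-- A Lissajous knot with pairwise coprime odd frequencies has a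
constant loop sequence: every derivative of its parametrization is injective on
`[0, 2π)` and ambient isotopic to the knot itself. -/
theorem stmt12 (n₁ n₂ n₃ : ℕ) (h₁ : Odd n₁) (h₂ : Odd n₂) (h₃ : Odd n₃)
    (hco1 : Nat.Coprime n₁ n₂) (hco2 : Nat.Coprime n₁ n₃) (hco3 : Nat.Coprime n₂ n₃)
    (φ₁ φ₂ φ₃ : ℝ) (hφ₁ : φ₁ ∈ Set.Ico (0:ℝ) (2 * π))
    (hφ₂ : φ₂ ∈ Set.Ico (0:ℝ) (2 * π)) (hφ₃ : φ₃ ∈ Set.Ico (0:ℝ) (2 * π))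
    (f : ℝ → ℝ × ℝ × ℝ)
    (hf : ∀ t : ℝ, f t =
      (Real.cos (n₁ * t + φ₁), Real.cos (n₂ * t + φ₂), Real.cos (n₃ * t + φ₃)))
    (hinj : Set.InjOn f (Set.Ico 0 (2 * π))) :
    ∀ n : ℕ, 1 ≤ n →
      Set.InjOn (iteratedDeriv n f) (Set.Ico 0 (2 * π)) ∧
      AmbientIsotopic (iteratedDeriv n f) f := by
  obtain ⟨m₁, hm₁⟩ := h₁
  obtain ⟨m₂, hm₂⟩ := h₂
  obtain ⟨m₃, hm₃⟩ := h₃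
  intro n hn
  -- setup
  set e : ℕ := (m₁ + m₂ + m₃) * n with he
  set b : ℝ := n * (π/2) + (if Even e then (0:ℝ) else π) with hb
  set s₁ : ℝ := (-1:ℝ)^(m₁*n+e) with hs₁def
  set s₂ : ℝ := (-1:ℝ)^(m₂*n+e) with hs₂def
  set s₃ : ℝ := (-1:ℝ)^(m₃*n+e) with hs₃def
  set κ₁ : ℝ := (n₁:ℝ)^n with hκ₁def
  set κ₂ : ℝ := (n₂:ℝ)^n with hκ₂def
  set κ₃ : ℝ := (n₃:ℝ)^n with hκ₃def
  have ha₁ : (n₁:ℝ) = 2*(m₁:ℝ)+1 := by rw [hm₁]; push_cast; ring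
  have ha₂ : (n₂:ℝ) = 2*(m₂:ℝ)+1 := by rw [hm₂]; push_cast; ring
  have ha₃ : (n₃:ℝ) = 2*(m₃:ℝ)+1 := by rw [hm₃]; push_cast; ring
  have hκ₁pos : 0 < κ₁ := by rw [hκ₁def, ha₁]; positivity
  have hκ₂pos : 0 < κ₂ := by rw [hκ₂def, ha₂]; positivity
  have hκ₃pos : 0 < κ₃ := by rw [hκ₃def, ha₃]; positivity
  have hs₁ : s₁ = 1 ∨ s₁ = -1 := by
    rcases Nat.even_or_odd (m₁*n+e) with h | h
    · exact Or.inl h.neg_one_pow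
    · exact Or.inr h.neg_one_pow
  have hs₂ : s₂ = 1 ∨ s₂ = -1 := by
    rcases Nat.even_or_odd (m₂*n+e) with h | h
    · exact Or.inl h.neg_one_pow
    · exact Or.inr h.neg_one_pow
  have hs₃ : s₃ = 1 ∨ s₃ = -1 := by
    rcases Nat.even_or_odd (m₃*n+e) with h | h
    · exact Or.inl h.neg_one_pow
    · exact Or.inr h.neg_one_pow
  have hprod : s₁ * (s₂ * s₃) = 1 := by
    rw [hs₁def, hs₂def, hs₃def, ← pow_add, ← pow_add]
    refine Even.neg_one_pow ?_
    refine ⟨2*e, ?_⟩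
    rw [he]; ring
  have hd₁ : s₁ * κ₁ ≠ 0 := by
    rcases hs₁ with h | h <;> rw [h] <;> simp [ne_of_gt hκ₁pos, hκ₁pos.ne']
  have hd₂ : s₂ * κ₂ ≠ 0 := by
    rcases hs₂ with h | h <;> rw [h] <;> simp [hκ₂pos.ne']
  have hd₃ : s₃ * κ₃ ≠ 0 := by
    rcases hs₃ with h | h <;> rw [h] <;> simp [hκ₃pos.ne']
  -- the derivative formula
  have hIter := iter_formula (n₁:ℝ) (n₂:ℝ) (n₃:ℝ) φ₁ φ₂ φ₃ f hf n
  have hg : ∀ t : ℝ, iteratedDeriv n f t =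
      (s₁ * κ₁ * (f (t+b)).1, s₂ * κ₂ * (f (t+b)).2.1, s₃ * κ₃ * (f (t+b)).2.2) := by
    intro t
    simp only [hIter, hf (t+b)]
    refine Prod.ext ?_ (Prod.ext ?_ ?_)
    · simpa [mul_assoc, hs₁def, hκ₁def] using coord_shift m₁ n e (n₁:ℝ) φ₁ t b ha₁ hb
    · simpa [mul_assoc, hs₂def, hκ₂def] using coord_shift m₂ n e (n₂:ℝ) φ₂ t b ha₂ hb
    · simpa [mul_assoc, hs₃def, hκ₃def] using coord_shift m₃ n e (n₃:ℝ) φ₃ t b ha₃ hb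
  -- periodicity of f
  have hper : Function.Periodic f (2*π) := by
    intro t
    have key : ∀ (k : ℕ) (x : ℝ), Real.cos ((k:ℝ)*(t+2*π) + x) = Real.cos ((k:ℝ)*t + x) := by
      intro k x
      have harg : (k:ℝ)*(t+2*π) + x = ((k:ℝ)*t + x) + ((2*k : ℕ):ℝ)*π := by push_cast; ring
      rw [harg, cosAddNatPi, pow_mul]
      norm_num
    rw [hf (t + 2*π), hf t, key n₁ φ₁, key n₂ φ₂, key n₃ φ₃]
  -- injectivity of the n-th derivative
  have hp2 : (0:ℝ) < 2*π := Real.two_pi_pos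
  have hInj : Set.InjOn (iteratedDeriv n f) (Set.Ico 0 (2*π)) := by
    intro t ht t' ht' heq
    rw [hg t, hg t'] at heq
    simp only [Prod.mk.injEq] at heq
    obtain ⟨e1, e2, e3⟩ := heq
    have hfe : f (t+b) = f (t'+b) :=
      Prod.ext (mul_left_cancel₀ hd₁ e1) (Prod.ext (mul_left_cancel₀ hd₂ e2) (mul_left_cancel₀ hd₃ e3))
    have hr1 : f (toIcoMod hp2 0 (t+b)) = f (t+b) := by
      rw [toIcoMod]; exact hper.sub_zsmul_eq _
    have hr2 : f (toIcoMod hp2 0 (t'+b)) = f (t'+b) := by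
      rw [toIcoMod]; exact hper.sub_zsmul_eq _
    have hm1 : toIcoMod hp2 0 (t+b) ∈ Set.Ico (0:ℝ) (2*π) := by
      have := toIcoMod_mem_Ico hp2 0 (t+b); rwa [zero_add] at this
    have hm2 : toIcoMod hp2 0 (t'+b) ∈ Set.Ico (0:ℝ) (2*π) := by
      have := toIcoMod_mem_Ico hp2 0 (t'+b); rwa [zero_add] at this
    have hreq : toIcoMod hp2 0 (t+b) = toIcoMod hp2 0 (t'+b) :=
      hinj hm1 hm2 (by rw [hr1, hr2, hfe])
    rw [toIcoMod, toIcoMod] at hreq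
    set j : ℤ := toIcoDiv hp2 0 (t+b) - toIcoDiv hp2 0 (t'+b) with hj
    have hdiff : t - t' = (j:ℝ) * (2*π) := by
      push_cast [hj, zsmul_eq_mul] at hreq ⊢
      linarith
    have habs : |t - t'| < 2*π := by
      rw [abs_sub_lt_iff]
      constructor <;> [linarith [ht.1, ht.2, ht'.1, ht'.2]; linarith [ht.1, ht.2, ht'.1, ht'.2]]
    rw [hdiff, abs_mul, abs_of_pos hp2] at habs
    have hjabs : |(j:ℝ)| < 1 := by nlinarith [abs_nonneg ((j:ℝ))]
    have hj0 : j = 0 := by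
      have h : |j| < 1 := by exact_mod_cast (by rwa [← Int.cast_abs] at hjabs : ((|j|:ℤ):ℝ) < 1)
      rcases abs_lt.mp h with ⟨hl, hr⟩
      omega
    rw [hj0] at hdiff
    simp at hdiff
    linarith
  refine ⟨hInj, ?_⟩
  -- angles
  set α : ℝ := if Even (m₁*n+e) then (0:ℝ) else π with hα
  set β : ℝ := if Even (m₃*n+e) then (0:ℝ) else π with hβ
  have hcα : Real.cos α = s₁ := by
    by_cases h : Even (m₁*n+e)
    · rw [hα, if_pos h, Real.cos_zero, hs₁def, h.neg_one_pow]
    · rw [hα, if_neg h, Real.cos_pi, hs₁def, (Nat.not_even_iff_odd.mp h).neg_one_pow]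
  have hsα : Real.sin α = 0 := by
    by_cases h : Even (m₁*n+e)
    · rw [hα, if_pos h, Real.sin_zero]
    · rw [hα, if_neg h, Real.sin_pi]
  have hcβ : Real.cos β = s₃ := by
    by_cases h : Even (m₃*n+e)
    · rw [hβ, if_pos h, Real.cos_zero, hs₃def, h.neg_one_pow]
    · rw [hβ, if_neg h, Real.cos_pi, hs₃def, (Nat.not_even_iff_odd.mp h).neg_one_pow]
  have hsβ : Real.sin β = 0 := by
    by_cases h : Even (m₃*n+e)
    · rw [hβ, if_pos h, Real.sin_zero]
    · rw [hβ, if_neg h, Real.sin_pi]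
  -- the ambient isotopy
  let Hfun : ℝ × (ℝ × ℝ × ℝ) → ℝ × ℝ × ℝ := fun p =>
    ((1 + p.1*(κ₁⁻¹-1)) * p.2.1 * Real.cos (p.1*α)
        - ((1 + p.1*(κ₂⁻¹-1)) * p.2.2.1 * Real.cos (p.1*β)
            - (1 + p.1*(κ₃⁻¹-1)) * p.2.2.2 * Real.sin (p.1*β)) * Real.sin (p.1*α),
     (1 + p.1*(κ₁⁻¹-1)) * p.2.1 * Real.sin (p.1*α)
        + ((1 + p.1*(κ₂⁻¹-1)) * p.2.2.1 * Real.cos (p.1*β)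
            - (1 + p.1*(κ₃⁻¹-1)) * p.2.2.2 * Real.sin (p.1*β)) * Real.cos (p.1*α),
     (1 + p.1*(κ₂⁻¹-1)) * p.2.2.1 * Real.sin (p.1*β)
        + (1 + p.1*(κ₃⁻¹-1)) * p.2.2.2 * Real.cos (p.1*β))
  refine ⟨Hfun, ?_, ?_, ?_, ?_⟩
  · -- continuity
    apply Continuous.continuousOn
    show Continuous Hfun
    fun_prop
  · -- H(0, x) = x
    intro x
    show ((1 + 0*(κ₁⁻¹-1)) * x.1 * Real.cos (0*α)
        - ((1 + 0*(κ₂⁻¹-1)) * x.2.1 * Real.cos (0*β)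
            - (1 + 0*(κ₃⁻¹-1)) * x.2.2 * Real.sin (0*β)) * Real.sin (0*α),
      (1 + 0*(κ₁⁻¹-1)) * x.1 * Real.sin (0*α)
        + ((1 + 0*(κ₂⁻¹-1)) * x.2.1 * Real.cos (0*β)
            - (1 + 0*(κ₃⁻¹-1)) * x.2.2 * Real.sin (0*β)) * Real.cos (0*α),
      (1 + 0*(κ₂⁻¹-1)) * x.2.1 * Real.sin (0*β)
        + (1 + 0*(κ₃⁻¹-1)) * x.2.2 * Real.cos (0*β)) = x
    rw [zero_mul, zero_mul, Real.cos_zero, Real.sin_zero]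
    norm_num
  · -- each time slice is a homeomorphism
    intro s hs
    have key : ∀ κ : ℝ, 0 < κ → (1 + s*(κ⁻¹-1)) ≠ 0 := fun κ hκ => key_ne s κ hs.1 hs.2 hκ
    exact ⟨bigHomeo _ _ _ (key κ₁ hκ₁pos) (key κ₂ hκ₂pos) (key κ₃ hκ₃pos) (s*α) (s*β),
      fun x => (bigHomeo_apply _ _ _ (key κ₁ hκ₁pos) (key κ₂ hκ₂pos) (key κ₃ hκ₃pos)
        (s*α) (s*β) x).symm⟩
  · -- the final homeomorphism maps the range correctly
    have hrange : Set.range (iteratedDeriv n f)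
        = (fun u : ℝ×ℝ×ℝ => (s₁*κ₁*u.1, s₂*κ₂*u.2.1, s₃*κ₃*u.2.2)) '' Set.range f := by
      have hcomp : iteratedDeriv n f
          = (fun u : ℝ×ℝ×ℝ => (s₁*κ₁*u.1, s₂*κ₂*u.2.1, s₃*κ₃*u.2.2)) ∘ (f ∘ fun t => t + b) :=
        funext fun t => hg t
      rw [hcomp, Set.range_comp]
      have hsurj : Function.Surjective (fun t : ℝ => t + b) := fun y => ⟨y - b, by ring⟩
      rw [hsurj.range_comp f]
    have himg : ∀ u : ℝ×ℝ×ℝ, Hfun (1, (s₁*κ₁*u.1, s₂*κ₂*u.2.1, s₃*κ₃*u.2.2)) = u := by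
      intro u
      show ((1 + 1*(κ₁⁻¹-1)) * (s₁*κ₁*u.1) * Real.cos (1*α)
          - ((1 + 1*(κ₂⁻¹-1)) * (s₂*κ₂*u.2.1) * Real.cos (1*β)
              - (1 + 1*(κ₃⁻¹-1)) * (s₃*κ₃*u.2.2) * Real.sin (1*β)) * Real.sin (1*α),
        (1 + 1*(κ₁⁻¹-1)) * (s₁*κ₁*u.1) * Real.sin (1*α)
          + ((1 + 1*(κ₂⁻¹-1)) * (s₂*κ₂*u.2.1) * Real.cos (1*β)
              - (1 + 1*(κ₃⁻¹-1)) * (s₃*κ₃*u.2.2) * Real.sin (1*β)) * Real.cos (1*α),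
        (1 + 1*(κ₂⁻¹-1)) * (s₂*κ₂*u.2.1) * Real.sin (1*β)
          + (1 + 1*(κ₃⁻¹-1)) * (s₃*κ₃*u.2.2) * Real.cos (1*β)) = u
      rw [one_mul α, one_mul β, hcα, hsα, hcβ, hsβ]
      have e1 : (1 + 1*(κ₁⁻¹-1)) * (s₁*κ₁*u.1) * s₁
          - ((1 + 1*(κ₂⁻¹-1)) * (s₂*κ₂*u.2.1) * s₃
              - (1 + 1*(κ₃⁻¹-1)) * (s₃*κ₃*u.2.2) * 0) * 0 = u.1 := by
        rcases hs₁ with h1 | h1 <;> rw [h1] <;> field_simp <;> ring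
      have e2 : (1 + 1*(κ₁⁻¹-1)) * (s₁*κ₁*u.1) * 0
          + ((1 + 1*(κ₂⁻¹-1)) * (s₂*κ₂*u.2.1) * s₃
              - (1 + 1*(κ₃⁻¹-1)) * (s₃*κ₃*u.2.2) * 0) * s₁ = u.2.1 := by
        rcases hs₁ with h1 | h1 <;> rcases hs₂ with h2 | h2 <;> rcases hs₃ with h3 | h3 <;>
          rw [h1, h2, h3] at hprod ⊢ <;> norm_num at hprod <;> norm_num <;> field_simp <;> ring
      have e3 : (1 + 1*(κ₂⁻¹-1)) * (s₂*κ₂*u.2.1) * 0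
          + (1 + 1*(κ₃⁻¹-1)) * (s₃*κ₃*u.2.2) * s₃ = u.2.2 := by
        rcases hs₃ with h3 | h3 <;> rw [h3] <;> field_simp <;> ring
      exact Prod.ext e1 (Prod.ext e2 e3)
    rw [hrange, Set.image_image]
    have hfinal : (fun u : ℝ×ℝ×ℝ => Hfun (1, (s₁*κ₁*u.1, s₂*κ₂*u.2.1, s₃*κ₃*u.2.2)))
        = id := funext himg
    rw [hfinal, Set.image_id]
end
end
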